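/- Let a and b be positive integers with gcd(a, b) = 1 and a ≤ b. Then there exist nonnegative integers m1, n1, m2, n2 with n1*m2 - m1*n2 = 1, a = m1 + m2, and b = n1 + n2; that is, every reduced fraction a/b with 0 < a/b ≤ 1 is the mediant of a unimodular pair of fractions. -/

import Mathlib

/-! Choose `m₂ ∈ [1, a]` inverting `b` modulo `a` and let `n₂ = (b m₂ - 1) / a ∈ [0, b)`.
The determinant of `(a - m₂)/(b - n₂)` and `m₂/n₂` is `b m₂ - a n₂ = 1`. -/

open Set

namespace Int

theorem exists_mem_Icc_one_dvd_mul_sub_one {a b : ℤ} (ha : 0 < a) (hcop : IsCoprime b a) :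
    ∃ m ∈ Icc 1 a, a ∣ b * m - 1 := by
  obtain ⟨u, v, huv⟩ := hcop
  refine ⟨(u - 1) % a + 1, ⟨?_, ?_⟩, Int.ModEq.dvd ?_⟩
  · linarith [emod_nonneg (u - 1) ha.ne']
  · linarith [emod_lt_of_pos (u - 1) ha]
  · have hm : (u - 1) % a + 1 ≡ u [ZMOD a] := by
      simpa using (mod_modEq (u - 1) a).add_right 1
    have hbu : b * u ≡ 1 [ZMOD a] := modEq_iff_dvd.mpr ⟨v, by linarith⟩
    exact ((hm.mul_left b).trans hbu).symm

theorem mem_Ico_of_mul_sub_mul_eq_one {a b m n : ℤ} (ha : 0 < a) (hb : 0 < b)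
    (hm : m ∈ Icc 1 a) (h : b * m - a * n = 1) : n ∈ Ico 0 b := by
  obtain ⟨hm1, hma⟩ := hm
  exact ⟨by nlinarith, by nlinarith⟩

end Int

theorem reduced_is_mediant_general (a b : ℤ) (ha : 0 < a) (hb : 0 < b)
    (hcop : Int.gcd a b = 1) :
    ∃ m1 n1 m2 n2 : ℤ, 0 ≤ m1 ∧ 0 ≤ n1 ∧ 0 ≤ m2 ∧ 0 ≤ n2 ∧
      n1 * m2 - m1 * n2 = 1 ∧ a = m1 + m2 ∧ b = n1 + n2 := by
  have hcop' : IsCoprime b a := Int.isCoprime_iff_gcd_eq_one.mpr (by rwa [Int.gcd_comm])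
  obtain ⟨m2, hm2, n2, hn2⟩ := Int.exists_mem_Icc_one_dvd_mul_sub_one ha hcop'
  have hdet : b * m2 - a * n2 = 1 := by linarith
  obtain ⟨hn2_nonneg, hn2_lt⟩ := Int.mem_Ico_of_mul_sub_mul_eq_one ha hb hm2 hdet
  refine ⟨a - m2, b - n2, m2, n2, by linarith [hm2.2], by linarith, by linarith [hm2.1],
    hn2_nonneg, by linear_combination hdet, by ring, by ring⟩

theorem reduced_is_mediant (a b : ℤ) (ha : 0 < a) (hb : 0 < b)
    (hcop : Int.gcd a b = 1) (hab : a ≤ b) :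
    ∃ m1 n1 m2 n2 : ℤ, 0 ≤ m1 ∧ 0 ≤ n1 ∧ 0 ≤ m2 ∧ 0 ≤ n2 ∧
      n1 * m2 - m1 * n2 = 1 ∧ a = m1 + m2 ∧ b = n1 + n2 :=
  reduced_is_mediant_general a b ha hb hcop
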